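/- Let R ≥ 1, M, K > 0, and let g : [R,∞) → ℝ be C² with |g(r)| ≤ M/r⁶ and |Δ_r g(r)| ≤ K/r⁶ for all r ≥ R. Then there exists a constant C > 0 (depending only on M, K and R) such that |g'(r)| ≤ C/r⁵ for all r ≥ R. -/

import Mathlib

/-!
Put `u s = s * g' s`, so that `u' s = s * Δ_r g s`. On `[r, 2r]` this gives `|u'| ≤ K / r⁵`, hence
`u` stays within `K / r⁴` of `u r` there. Comparing `∫_r^{2r} g' = g (2r) - g r = O(M / r⁶)` with
`∫_r^{2r} u r / s ds = u r * log 2` yields `|r * g' r| * log 2 ≤ 2M / r⁶ + K / r⁴` for `r > R`.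
The endpoint `r = R` follows by continuity of the one-sided derivative of `g`.
-/

open Set Real

/-- The radial Laplacian `Δ_r g(r) = g''(r) + g'(r)/r`. -/
noncomputable def radLap (g : ℝ → ℝ) (r : ℝ) : ℝ := deriv (deriv g) r + deriv g r / r

theorem abs_mul_log_sub_sub_le {g f v : ℝ → ℝ} {a b L : ℝ} (ha : 0 < a) (hab : a ≤ b)
    (hg : ∀ s ∈ Icc a b, HasDerivAt g (f s) s)
    (hu : ∀ s ∈ Icc a b, HasDerivAt (fun s => s * f s) (v s) s)
    (hv : ∀ s ∈ Icc a b, |v s| ≤ L) :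
    |a * f a * log (b / a) - (g b - g a)| ≤ L * (b - a) := by
  set u : ℝ → ℝ := fun s => s * f s
  have hIcc : uIcc a b = Icc a b := uIcc_of_le hab
  have hpos : ∀ s ∈ Icc a b, 0 < s := fun s hs => ha.trans_le hs.1
  have hf_cont : ContinuousOn f (Icc a b) := by
    have hu_cont : ContinuousOn u (Icc a b) := fun s hs =>
      (hu s hs).continuousAt.continuousWithinAt
    refine (hu_cont.div continuousOn_id fun s hs => (hpos s hs).ne').congr fun s hs => ?_
    simp [u, (hpos s hs).ne']
  have hmv : ∀ s ∈ Icc a b, |u s - u a| ≤ L * (s - a) := by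
    intro s hs
    simpa [Real.norm_eq_abs, abs_of_nonneg (sub_nonneg.mpr hs.1)] using
      (convex_Icc a b).norm_image_sub_le_of_norm_hasDerivWithin_le
        (fun x hx => (hu x hx).hasDerivWithinAt) (fun x hx => hv x hx)
        (left_mem_Icc.mpr hab) hs
  have hclose : ∀ s ∈ uIoc a b, |f s - u a / s| ≤ L := by
    intro s hs
    rw [uIoc_of_le hab] at hs
    have hs' : s ∈ Icc a b := Ioc_subset_Icc_self hs
    have hs0 := hpos s hs'
    have hL : 0 ≤ L := (abs_nonneg _).trans (hv s hs')
    rw [show f s - u a / s = (u s - u a) / s by simp only [u]; field_simp, abs_div, abs_of_pos hs0,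
      div_le_iff₀ hs0]
    nlinarith [hmv s hs', hs'.1]
  have hftc : ∫ s in a..b, f s = g b - g a :=
    intervalIntegral.integral_eq_sub_of_hasDerivAt (fun s hs => hg s (hIcc ▸ hs))
      (hf_cont.intervalIntegrable_of_Icc hab)
  have h0 : (0 : ℝ) ∉ uIcc a b := fun h => (hpos 0 (hIcc ▸ h)).false
  have hlog : ∫ s in a..b, u a / s = u a * log (b / a) := by
    simp only [div_eq_mul_inv, intervalIntegral.integral_const_mul, integral_inv h0]
  have hinv_cont : ContinuousOn (fun s => u a / s) (Icc a b) :=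
    continuousOn_const.div continuousOn_id fun s hs => (hpos s hs).ne'
  have hsplit : u a * log (b / a) - (g b - g a) = -∫ s in a..b, (f s - u a / s) := by
    rw [intervalIntegral.integral_sub (hf_cont.intervalIntegrable_of_Icc hab)
      (hinv_cont.intervalIntegrable_of_Icc hab), hftc, hlog]
    ring
  rw [hsplit, abs_neg, ← abs_of_nonneg (sub_nonneg.mpr hab)]
  simpa only [Real.norm_eq_abs] using intervalIntegral.norm_integral_le_of_norm_le_const
    (f := fun s => f s - u a / s) hclose

theorem mul_radLap_eq {g : ℝ → ℝ} {s : ℝ} (hs : s ≠ 0) :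
    s * radLap g s = deriv g s + s * deriv (deriv g) s := by
  simp only [radLap]
  field_simp
  ring

theorem abs_deriv_le_of_radLap_le {g : ℝ → ℝ} {R M K r : ℝ} (hR : 1 ≤ R) (hM : 0 ≤ M) (hK : 0 ≤ K)
    (hg : ContDiffOn ℝ 2 g (Ici R))
    (hgb : ∀ r ≥ R, |g r| ≤ M / r ^ 6)
    (hlap : ∀ r ≥ R, |radLap g r| ≤ K / r ^ 6) (hr : R < r) :
    |deriv g r| ≤ (2 * M + K) / log 2 / r ^ 5 := by
  have hr0 : 0 < r := by linarith
  have hr1 : 1 ≤ r := by linarith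
  have hsub : Icc r (2 * r) ⊆ Ioi R := fun s hs => hr.trans_le hs.1
  have hg' : ContDiffOn ℝ 1 (deriv g) (Ioi R) :=
    (hg.mono Ioi_subset_Ici_self).deriv_of_isOpen isOpen_Ioi (by norm_num)
  have hu : ∀ s ∈ Icc r (2 * r),
      HasDerivAt (fun s => s * deriv g s) (s * radLap g s) s := by
    intro s hs
    have hs' : R < s := hsub hs
    rw [mul_radLap_eq (by linarith [hs.1])]
    simpa [Pi.mul_def] using (hasDerivAt_id' s).mul
      ((hg'.contDiffAt (Ioi_mem_nhds hs')).differentiableAt one_ne_zero).hasDerivAt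
  have hv : ∀ s ∈ Icc r (2 * r), |s * radLap g s| ≤ K / r ^ 5 := by
    intro s hs
    have hs0 : 0 < s := hr0.trans_le hs.1
    calc |s * radLap g s| ≤ s * (K / s ^ 6) := by
          rw [abs_mul, abs_of_pos hs0]
          exact mul_le_mul_of_nonneg_left (hlap s (hsub hs).le) hs0.le
      _ = K / s ^ 5 := by field_simp
      _ ≤ K / r ^ 5 := by gcongr; exact hs.1
  have hg_deriv : ∀ s ∈ Icc r (2 * r), HasDerivAt g (deriv g s) s := fun s hs =>
    ((hg.contDiffAt (Ici_mem_nhds (hsub hs))).differentiableAt two_ne_zero).hasDerivAt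
  have key := abs_mul_log_sub_sub_le hr0 (by linarith) hg_deriv hu hv
  rw [show 2 * r / r = 2 by field_simp, show 2 * r - r = r by ring] at key
  have hg2r : |g (2 * r)| ≤ M / r ^ 6 :=
    (hgb _ (by linarith)).trans (by gcongr; linarith)
  have hlog : 0 < log 2 := log_pos one_lt_two
  have hmain : r * |deriv g r| * log 2 ≤ 2 * M / r ^ 6 + K / r ^ 4 := by
    calc r * |deriv g r| * log 2 = |r * deriv g r * log 2| := by
          rw [abs_mul, abs_mul, abs_of_pos hr0, abs_of_pos hlog]
      _ ≤ |r * deriv g r * log 2 - (g (2 * r) - g r)| + |g (2 * r)| + |g r| := by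
          linarith [abs_sub_abs_le_abs_sub (r * deriv g r * log 2) (g (2 * r) - g r),
            abs_sub (g (2 * r)) (g r)]
      _ ≤ K / r ^ 5 * r + M / r ^ 6 + M / r ^ 6 := by
          gcongr
          exact hgb r hr.le
      _ = 2 * M / r ^ 6 + K / r ^ 4 := by field_simp; ring
  rw [show (2 * M + K) / log 2 / r ^ 5 = (2 * M + K) / r ^ 4 / (r * log 2) by
    field_simp, le_div_iff₀ (by positivity)]
  calc |deriv g r| * (r * log 2) ≤ 2 * M / r ^ 6 + K / r ^ 4 := by linarith
    _ ≤ 2 * M / r ^ 4 + K / r ^ 4 := by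
        gcongr
        norm_num
    _ = (2 * M + K) / r ^ 4 := by ring

theorem abs_deriv_le_of_forall_gt {g h : ℝ → ℝ} {R : ℝ} (hg : ContDiffOn ℝ 1 g (Ici R))
    (hh : ContinuousWithinAt h (Ioi R) R) (hh0 : 0 ≤ h R)
    (hbound : ∀ r > R, |deriv g r| ≤ h r) : |deriv g R| ≤ h R := by
  -- `deriv g R` is either the right derivative, continuous on `Ici R`, or the junk value `0`.
  by_cases hd : DifferentiableAt ℝ g R
  · have hφ : ContinuousWithinAt (derivWithin g (Ici R)) (Ioi R) R :=
      (hg.continuousOn_derivWithin (uniqueDiffOn_Ici R) le_rfl R self_mem_Ici).mono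
        Ioi_subset_Ici_self
    rw [← hd.derivWithin (uniqueDiffOn_Ici R R self_mem_Ici)]
    refine le_of_tendsto_of_tendsto hφ.abs hh ?_
    filter_upwards [self_mem_nhdsWithin] with s hs
    rw [derivWithin_of_mem_nhds (Ici_mem_nhds hs)]
    exact hbound s hs
  · simpa [deriv_zero_of_not_differentiableAt hd] using hh0

theorem stmt18 (R M K : ℝ) (hR : 1 ≤ R) (hM : 0 < M) (hK : 0 < K)
    (g : ℝ → ℝ) (hg : ContDiffOn ℝ 2 g (Set.Ici R))
    (hgb : ∀ r ≥ R, |g r| ≤ M / r ^ 6)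
    (hlap : ∀ r ≥ R, |radLap g r| ≤ K / r ^ 6) :
    ∃ C > (0 : ℝ), ∀ r ≥ R, |deriv g r| ≤ C / r ^ 5 := by
  have hgt : ∀ r > R, |deriv g r| ≤ (2 * M + K) / log 2 / r ^ 5 := fun r hr =>
    abs_deriv_le_of_radLap_le hR hM.le hK.le hg hgb hlap hr
  refine ⟨(2 * M + K) / log 2, by positivity, fun r hr => ?_⟩
  rcases hr.eq_or_lt with rfl | hr
  · refine abs_deriv_le_of_forall_gt (hg.of_le one_le_two) ?_ (by positivity) hgt
    exact (continuousAt_const.div (continuousAt_pow R 5) (by positivity)).continuousWithinAt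
  · exact hgt r hr
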